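/- arXiv:1207.4735 — 2 statements merged into one kernel-verified Lean document; each statement's English description precedes it below -/
import Mathlib

section
/- Let β ∈ (0,1), N ≥ 1 and C ≥ 0, and let a : (0,∞) → ℂ be continuously differentiable with |a(r)| ≤ C r^{β−1}(1+r)^{−N} and |a'(r)| ≤ C r^{β−2}(1+r)^{−N} for all r > 0. Then the integral ∫_0^∞ e^{−itr} a(r) dr converges absolutely for every t, and there exists a constant C' depending only on C, β, N such that |∫_0^∞ e^{−itr} a(r) dr| ≤ C' t^{−β} for every t ≥ 1. -/
/-!
Split the integral at `r = 1/t`. On `(0, 1/t]` the bound `‖a r‖ ≤ C r^(β-1)` integrates to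
`C t^(-β) / β`. On `(1/t, ∞)` integrate by parts, writing `e^(-itr)` as `(-it)⁻¹` times its own
derivative: the boundary term at `1/t` and the integral of `‖a'‖ ≤ C r^(β-2)` over `(1/t, ∞)` are
both `O(t^(1-β))`, and the factor `1/t` makes them `O(t^(-β))`.
-/

open MeasureTheory Set Complex

section Phase

theorem norm_cexp_neg_I_mul (t r : ℝ) : ‖cexp (-(I * t * r))‖ = 1 := by
  rw [norm_exp]
  simp

theorem hasDerivAt_cexp_neg_I_mul (t r : ℝ) :
    HasDerivAt (fun r : ℝ => cexp (-(I * t * r))) (-(I * t) * cexp (-(I * t * r))) r := by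
  have h : HasDerivAt (fun r : ℝ => -(I * t * (r : ℂ))) (-(I * t)) r := by
    simpa using ((hasDerivAt_id r).ofReal_comp.const_mul (I * t)).fun_neg
  simpa [mul_comm] using h.cexp

theorem MeasureTheory.IntegrableOn.cexp_neg_I_mul {g : ℝ → ℂ} {s : Set ℝ} (hg : IntegrableOn g s)
    (t : ℝ) :
    IntegrableOn (fun r : ℝ => cexp (-(I * t * r)) * g r) s :=
  hg.bdd_mul (by fun_prop) (ae_of_all _ fun r => (norm_cexp_neg_I_mul t r).le)

end Phase

section RpowBounds

variable {E : Type*} [NormedAddCommGroup E] {g : ℝ → E} {C s c : ℝ}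

theorem norm_setIntegral_Ioc_zero_le_of_norm_le_rpow [NormedSpace ℝ E] (hs : -1 < s) (hc : 0 ≤ c)
    (hg : ∀ r ∈ Ioc 0 c, ‖g r‖ ≤ C * r ^ s) :
    ‖∫ r in Ioc (0 : ℝ) c, g r‖ ≤ C * c ^ (s + 1) / (s + 1) := by
  have hmaj : IntegrableOn (fun r : ℝ => C * r ^ s) (Ioc 0 c) := by
    rw [← intervalIntegrable_iff_integrableOn_Ioc_of_le hc]
    exact (intervalIntegral.intervalIntegrable_rpow' hs).const_mul C
  calc ‖∫ r in Ioc (0 : ℝ) c, g r‖ ≤ ∫ r in Ioc (0 : ℝ) c, C * r ^ s :=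
        norm_integral_le_of_norm_le hmaj ((ae_restrict_iff' measurableSet_Ioc).2 (ae_of_all _ hg))
    _ = C * c ^ (s + 1) / (s + 1) := by
        rw [← intervalIntegral.integral_of_le hc, intervalIntegral.integral_const_mul,
          integral_rpow (Or.inl hs), Real.zero_rpow (by linarith)]
        ring

theorem integrableOn_Ioi_of_norm_le_rpow (hs : s < -1) (hc : 0 < c)
    (hgm : AEStronglyMeasurable g (volume.restrict (Ioi c)))
    (hg : ∀ r ∈ Ioi c, ‖g r‖ ≤ C * r ^ s) : IntegrableOn g (Ioi c) :=
  ((integrableOn_Ioi_rpow_of_lt hs hc).const_mul C).mono' hgm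
    ((ae_restrict_iff' measurableSet_Ioi).2 (ae_of_all _ hg))

theorem norm_setIntegral_Ioi_le_of_norm_le_rpow [NormedSpace ℝ E] (hs : s < -1) (hc : 0 < c)
    (hg : ∀ r ∈ Ioi c, ‖g r‖ ≤ C * r ^ s) :
    ‖∫ r in Ioi c, g r‖ ≤ C * c ^ (s + 1) / -(s + 1) := by
  calc ‖∫ r in Ioi c, g r‖ ≤ ∫ r in Ioi c, C * r ^ s :=
        norm_integral_le_of_norm_le ((integrableOn_Ioi_rpow_of_lt hs hc).const_mul C)
          ((ae_restrict_iff' measurableSet_Ioi).2 (ae_of_all _ hg))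
    _ = C * c ^ (s + 1) / -(s + 1) := by
        rw [integral_const_mul, integral_Ioi_rpow_of_lt hs hc]
        simp only [div_neg, neg_div, mul_neg, mul_div_assoc]

theorem le_of_le_mul_one_add_rpow_neg {x y r N : ℝ} (hx : 0 ≤ x) (hr : 0 ≤ r) (hN : 0 ≤ N)
    (h : x ≤ y * (1 + r) ^ (-N)) : x ≤ y := by
  have hpos : 0 < (1 + r) ^ (-N) := by positivity
  have hy : 0 ≤ y := nonneg_of_mul_nonneg_left (hx.trans h) hpos
  exact h.trans (mul_le_of_le_one_right hy
    (Real.rpow_le_one_of_one_le_of_nonpos (by linarith) (by linarith)))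

theorem integrableOn_Ioi_zero_rpow_mul_one_add_rpow_neg {β N : ℝ} (hβ : 0 < β) (hβN : β < N) :
    IntegrableOn (fun r : ℝ => r ^ (β - 1) * (1 + r) ^ (-N)) (Ioi 0) := by
  have hm : ∀ u : Set ℝ, AEStronglyMeasurable (fun r : ℝ => r ^ (β - 1) * (1 + r) ^ (-N))
      (volume.restrict u) := fun u => by fun_prop
  rw [← Ioc_union_Ioi_eq_Ioi zero_le_one]
  refine IntegrableOn.union ?_ ?_
  · have hmaj : IntegrableOn (fun r : ℝ => r ^ (β - 1)) (Ioc 0 1) := by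
      rw [← intervalIntegrable_iff_integrableOn_Ioc_of_le zero_le_one]
      exact intervalIntegral.intervalIntegrable_rpow' (by linarith)
    refine hmaj.mono' (hm _) ((ae_restrict_iff' measurableSet_Ioc).2 (ae_of_all _ ?_))
    intro r ⟨hr, _⟩
    rw [Real.norm_of_nonneg (by positivity)]
    exact mul_le_of_le_one_right (by positivity)
      (Real.rpow_le_one_of_one_le_of_nonpos (by linarith) (by linarith))
  · refine integrableOn_Ioi_of_norm_le_rpow (C := 1) (s := β - 1 - N)
      (g := fun r : ℝ => r ^ (β - 1) * (1 + r) ^ (-N)) (by linarith) one_pos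
      (hm _) fun r (hr : 1 < r) => ?_
    have hr0 : 0 < r := one_pos.trans hr
    rw [Real.norm_of_nonneg (by positivity), one_mul, sub_eq_add_neg _ N,
      Real.rpow_add hr0]
    exact mul_le_mul_of_nonneg_left
      (Real.rpow_le_rpow_of_nonpos hr0 (by linarith) (by linarith)) (by positivity)

end RpowBounds

theorem integral_Ioi_cexp_neg_I_mul_eq {a a' : ℝ → ℂ} {t c : ℝ} (ht : t ≠ 0)
    (hderiv : ∀ r ∈ Ici c, HasDerivAt a (a' r) r) (ha : IntegrableOn a (Ioi c))
    (ha' : IntegrableOn a' (Ioi c)) :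
    ∫ r in Ioi c, cexp (-(I * t * r)) * a r =
      (I * t)⁻¹ * (cexp (-(I * t * c)) * a c + ∫ r in Ioi c, cexp (-(I * t * r)) * a' r) := by
  have hIt : I * t ≠ 0 := mul_ne_zero I_ne_zero (ofReal_ne_zero.2 ht)
  have hF : ∀ r ∈ Ici c, HasDerivAt (fun r : ℝ => -(I * t)⁻¹ * (cexp (-(I * t * r)) * a r))
      (cexp (-(I * t * r)) * a r - (I * t)⁻¹ * (cexp (-(I * t * r)) * a' r)) r := by
    intro r hr
    refine (((hasDerivAt_cexp_neg_I_mul t r).fun_mul (hderiv r hr)).const_mul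
      (-(I * t)⁻¹)).congr_deriv ?_
    linear_combination (cexp (-(I * t * r)) * a r) * inv_mul_cancel₀ hIt
  have hF'int := (ha.cexp_neg_I_mul t).sub ((ha'.cexp_neg_I_mul t).const_mul (I * t)⁻¹)
  have hFlim := tendsto_zero_of_hasDerivAt_of_integrableOn_Ioi
    (fun r hr => hF r (Ioi_subset_Ici_self hr)) hF'int ((ha.cexp_neg_I_mul t).const_mul _)
  have hFTC := integral_Ioi_of_hasDerivAt_of_tendsto' hF hF'int hFlim
  rw [integral_sub (ha.cexp_neg_I_mul t) ((ha'.cexp_neg_I_mul t).const_mul _),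
    integral_const_mul] at hFTC
  linear_combination hFTC

theorem norm_integral_Ioi_cexp_neg_I_mul_le {a : ℝ → ℂ} {β C t : ℝ} (hβ0 : 0 < β) (hβ1 : β < 1)
    (ht : 0 < t) (hdiff : DifferentiableOn ℝ a (Ioi 0)) (hint : IntegrableOn a (Ioi 0))
    (hb : ∀ r, 0 < r → ‖a r‖ ≤ C * r ^ (β - 1))
    (hb' : ∀ r, 0 < r → ‖deriv a r‖ ≤ C * r ^ (β - 2)) :
    ‖∫ r in Ioi (0 : ℝ), cexp (-(I * t * r)) * a r‖ ≤
      C * (1 / β + 1 + 1 / (1 - β)) * t ^ (-β) := by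
  set c := t⁻¹
  have hc : 0 < c := inv_pos.2 ht
  have hderiv : ∀ r ∈ Ici c, HasDerivAt a (deriv a r) r := fun r hr =>
    (hdiff.differentiableAt (Ioi_mem_nhds (hc.trans_le hr))).hasDerivAt
  have ha'int : IntegrableOn (deriv a) (Ioi c) :=
    integrableOn_Ioi_of_norm_le_rpow (s := β - 2) (by linarith) hc
      (measurable_deriv a).aestronglyMeasurable fun r hr => hb' r (hc.trans hr)
  have hsplit : ∫ r in Ioi (0 : ℝ), cexp (-(I * t * r)) * a r =
      (∫ r in Ioc (0 : ℝ) c, cexp (-(I * t * r)) * a r) +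
        ∫ r in Ioi c, cexp (-(I * t * r)) * a r := by
    rw [← setIntegral_union (Ioc_disjoint_Ioi le_rfl) measurableSet_Ioi
      ((hint.cexp_neg_I_mul t).mono_set Ioc_subset_Ioi_self)
      ((hint.cexp_neg_I_mul t).mono_set (Ioi_subset_Ioi hc.le)), Ioc_union_Ioi_eq_Ioi hc.le]
  have hnear : ‖∫ r in Ioc (0 : ℝ) c, cexp (-(I * t * r)) * a r‖ ≤ C * c ^ β / β := by
    simpa using norm_setIntegral_Ioc_zero_le_of_norm_le_rpow (s := β - 1) (by linarith) hc.le
      fun r hr => by rw [norm_mul, norm_cexp_neg_I_mul, one_mul]; exact hb r hr.1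
  have hbdry : ‖cexp (-(I * t * c)) * a c‖ ≤ C * c ^ (β - 1) := by
    rw [norm_mul, norm_cexp_neg_I_mul, one_mul]; exact hb c hc
  have htail : ‖∫ r in Ioi c, cexp (-(I * t * r)) * deriv a r‖ ≤ C * c ^ (β - 1) / (1 - β) := by
    refine (norm_setIntegral_Ioi_le_of_norm_le_rpow (C := C) (s := β - 2) (by linarith) hc
      fun r hr => ?_).trans_eq ?_
    · rw [norm_mul, norm_cexp_neg_I_mul, one_mul]
      exact hb' r (hc.trans hr)
    · rw [show β - 2 + 1 = β - 1 by ring, neg_sub]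
  have hnorm_add_le : ∀ x y z : ℂ, ‖x + (I * t)⁻¹ * (y + z)‖ ≤ ‖x‖ + c * (‖y‖ + ‖z‖) := by
    have hnormIt : ‖(I * t)⁻¹‖ = c := by
      rw [norm_inv, norm_mul, norm_I, one_mul, norm_real, Real.norm_of_nonneg ht.le]
    intro x y z
    grw [norm_add_le, norm_mul, hnormIt, norm_add_le]
  rw [hsplit, integral_Ioi_cexp_neg_I_mul_eq ht.ne' hderiv (hint.mono_set (Ioi_subset_Ioi hc.le))
    ha'int, show t ^ (-β) = c ^ β by rw [Real.rpow_neg ht.le, Real.inv_rpow ht.le]]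
  calc _ ≤ C * c ^ β / β + c * (C * c ^ (β - 1) + C * c ^ (β - 1) / (1 - β)) := by
        refine (hnorm_add_le _ _ _).trans ?_
        gcongr
    _ = C * (1 / β + 1 + 1 / (1 - β)) * c ^ β := by
        have : 1 - β ≠ 0 := by linarith
        rw [Real.rpow_sub_one hc.ne']
        field_simp
        ring

theorem stmt3_general (β N C : ℝ) (hβ0 : 0 < β) (hβ1 : β < 1) (hN : 1 ≤ N) :
    ∃ C' : ℝ, ∀ a : ℝ → ℂ,
      ContDiffOn ℝ 1 a (Set.Ioi 0) →
      (∀ r : ℝ, 0 < r → ‖a r‖ ≤ C * r ^ (β - 1) * (1 + r) ^ (-N)) →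
      (∀ r : ℝ, 0 < r → ‖deriv a r‖ ≤ C * r ^ (β - 2) * (1 + r) ^ (-N)) →
      (∀ t : ℝ, IntegrableOn
          (fun r : ℝ => Complex.exp (-(Complex.I * t * r)) * a r) (Set.Ioi 0)) ∧
      ∀ t : ℝ, 1 ≤ t →
        ‖∫ r in Set.Ioi (0 : ℝ), Complex.exp (-(Complex.I * t * r)) * a r‖ ≤
          C' * t ^ (-β) := by
  refine ⟨C * (1 / β + 1 + 1 / (1 - β)), fun a ha hb hb' => ?_⟩
  have hint : IntegrableOn a (Ioi 0) :=
    ((integrableOn_Ioi_zero_rpow_mul_one_add_rpow_neg hβ0 (hβ1.trans_le hN)).const_mul C).mono'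
      (ha.continuousOn.aestronglyMeasurable measurableSet_Ioi)
      ((ae_restrict_iff' measurableSet_Ioi).2
        (ae_of_all _ fun r hr => (hb r hr).trans_eq (mul_assoc _ _ _)))
  refine ⟨fun t => hint.cexp_neg_I_mul t, fun t ht => ?_⟩
  exact norm_integral_Ioi_cexp_neg_I_mul_le hβ0 hβ1 (one_pos.trans_le ht)
    (ha.differentiableOn one_ne_zero) hint
    (fun r hr => le_of_le_mul_one_add_rpow_neg (norm_nonneg _) hr.le (by linarith) (hb r hr))
    (fun r hr => le_of_le_mul_one_add_rpow_neg (norm_nonneg _) hr.le (by linarith) (hb' r hr))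

/-- van der Corput-type estimate. If `a` is continuously differentiable on
`(0,∞)` with `|a(r)| ≤ C r^{β-1}(1+r)^{-N}` and `|a'(r)| ≤ C r^{β-2}(1+r)^{-N}` for `r > 0`,
where `β ∈ (0,1)`, `N ≥ 1`, `C ≥ 0`, then `∫_0^∞ e^{-itr} a(r) dr` converges absolutely for
every `t`, and `|∫_0^∞ e^{-itr} a(r) dr| ≤ C' t^{-β}` for all `t ≥ 1`, with `C'` depending
only on `C`, `β`, `N`. -/
theorem stmt3 (β N C : ℝ) (hβ0 : 0 < β) (hβ1 : β < 1) (hN : 1 ≤ N) (hC : 0 ≤ C) :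
    ∃ C' : ℝ, ∀ a : ℝ → ℂ,
      ContDiffOn ℝ 1 a (Set.Ioi 0) →
      (∀ r : ℝ, 0 < r → ‖a r‖ ≤ C * r ^ (β - 1) * (1 + r) ^ (-N)) →
      (∀ r : ℝ, 0 < r → ‖deriv a r‖ ≤ C * r ^ (β - 2) * (1 + r) ^ (-N)) →
      (∀ t : ℝ, IntegrableOn
          (fun r : ℝ => Complex.exp (-(Complex.I * t * r)) * a r) (Set.Ioi 0)) ∧
      ∀ t : ℝ, 1 ≤ t →
        ‖∫ r in Set.Ioi (0 : ℝ), Complex.exp (-(Complex.I * t * r)) * a r‖ ≤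
          C' * t ^ (-β) :=
  stmt3_general β N C hβ0 hβ1 hN
end

section
/- Let μ > 0 and m ∈ {2, 3}, and suppose g : ℝ³ → ℂ is m-times continuously differentiable on ℝ³ \ {0} and for every integer N ≥ 0 there is C_N ≥ 0 such that ‖D^j g(k)‖ ≤ C_N ‖k‖^{μ−j}(1+‖k‖)^{−N} for all 0 ≤ j ≤ m and all k ≠ 0. Then the spherical average F(r) := ∫_{S²} |g(rσ)|² dσ(σ) is m-times continuously differentiable on (0,∞), and for every integer N ≥ 0 there is C'_N ≥ 0 such that |F^{(j)}(r)| ≤ C'_N r^{2μ−j}(1+r)^{−N} for all 0 ≤ j ≤ m and r > 0. -/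
open MeasureTheory

/-- The spherical average `F(r) = ∫_{S²} |g(rσ)|² dσ(σ)`, where `S²` is the unit sphere
in `ℝ³` with its 2-dimensional Hausdorff (surface) measure. -/
noncomputable def sphAvg (g : EuclideanSpace ℝ (Fin 3) → ℂ) (r : ℝ) : ℝ :=
  ∫ σ in Metric.sphere (0 : EuclideanSpace ℝ (Fin 3)) 1, ‖g (r • σ)‖ ^ 2 ∂(μH[2])

/-!
Put `f = ‖g‖²`. By Leibniz's rule `f` satisfies the estimates of `g` with `μ` replaced by `2μ`.
The `j`-th derivative of `t ↦ f(tσ)` at `r` is `D^j f(rσ)(σ, …, σ)`, which for `‖σ‖ = 1` is bounded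
by `C r^{2μ-j}(1+r)^{-N}`. The surface measure of `S²` is finite, since `S²` is a Lipschitz image of
a square under spherical coordinates; so these bounds (for `N = 0`, locally uniform in `r > 0`)
dominate the integrands, and `F` may be differentiated `m` times under the integral sign. The bound
on `F^{(j)}` is then the pointwise bound times the area of `S²`.
-/

open Metric Set Filter Topology

noncomputable def sphericalCoord (p : ℝ × ℝ) : EuclideanSpace ℝ (Fin 3) :=
  WithLp.toLp 2 ![Real.sin p.1 * Real.cos p.2, Real.sin p.1 * Real.sin p.2, Real.cos p.1]

lemma contDiff_sphericalCoord : ContDiff ℝ 1 sphericalCoord := by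
  refine contDiff_piLp (p := 2) |>.2 fun i => ?_
  fin_cases i <;> simp [sphericalCoord] <;> fun_prop

lemma sphere_subset_image_sphericalCoord :
    sphere (0 : EuclideanSpace ℝ (Fin 3)) 1 ⊆ sphericalCoord '' closedBall 0 4 := by
  intro x hx
  have hsum : x 0 ^ 2 + x 1 ^ 2 + x 2 ^ 2 = 1 := by
    have := EuclideanSpace.norm_eq x
    simp_all [Fin.sum_univ_three]
  have hx2 : -1 ≤ x 2 ∧ x 2 ≤ 1 := by constructor <;> nlinarith
  set w : ℂ := ⟨x 0, x 1⟩
  have hsin : Real.sin (Real.arccos (x 2)) = ‖w‖ := by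
    rw [Real.sin_arccos, Complex.norm_def, Complex.normSq_mk]
    congr 1
    nlinarith
  refine ⟨(Real.arccos (x 2), Complex.arg w), ?_, ?_⟩
  · have := Real.pi_le_four
    rw [mem_closedBall, dist_zero_right, Prod.norm_def, Real.norm_eq_abs, Real.norm_eq_abs,
      abs_of_nonneg (Real.arccos_nonneg _)]
    exact max_le (by linarith [Real.arccos_le_pi (x 2)]) (by linarith [Complex.abs_arg_le_pi w])
  · ext i
    fin_cases i
    · simp [sphericalCoord, hsin, Complex.norm_mul_cos_arg, w]
    · simp [sphericalCoord, hsin, Complex.norm_mul_sin_arg, w]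
    · simp [sphericalCoord, Real.cos_arccos hx2.1 hx2.2]

theorem hausdorffMeasure_sphere_lt_top :
    (μH[2] : Measure (EuclideanSpace ℝ (Fin 3))) (sphere 0 1) < ⊤ := by
  obtain ⟨K, hK⟩ := contDiff_sphericalCoord.locallyLipschitz.locallyLipschitzOn
    |>.exists_lipschitzOnWith_of_compact (isCompact_closedBall (0 : ℝ × ℝ) 4)
  calc μH[2] (sphere (0 : EuclideanSpace ℝ (Fin 3)) 1)
      ≤ μH[2] (sphericalCoord '' closedBall 0 4) := measure_mono sphere_subset_image_sphericalCoord
    _ ≤ (K : ENNReal) ^ (2 : ℝ) * μH[2] (closedBall (0 : ℝ × ℝ) 4) :=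
        hK.hausdorffMeasure_image_le (by norm_num)
    _ < ⊤ := by
        rw [hausdorffMeasure_prod_real]
        exact ENNReal.mul_lt_top (by simp) measure_closedBall_lt_top

section NormSq

variable {E F : Type*} [NormedAddCommGroup E] [NormedSpace ℝ E]
  [NormedAddCommGroup F] [InnerProductSpace ℝ F]
  {n : WithTop ℕ∞} {g : E → F} {s : Set E} {x : E} {i : ℕ}

theorem norm_iteratedFDerivWithin_norm_sq_le (hg : ContDiffOn ℝ n g s) (hs : UniqueDiffOn ℝ s)
    (hx : x ∈ s) (hi : i ≤ n) :
    ‖iteratedFDerivWithin ℝ i (fun y => ‖g y‖ ^ 2) s x‖ ≤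
      ∑ k ∈ Finset.range (i + 1), (i.choose k : ℝ) * ‖iteratedFDerivWithin ℝ k g s x‖ *
        ‖iteratedFDerivWithin ℝ (i - k) g s x‖ := by
  simp_rw [← real_inner_self_eq_norm_sq]
  exact (innerSL ℝ).norm_iteratedFDerivWithin_le_of_bilinear_of_le_one hg hg hs hx hi
    (norm_innerSL_le ℝ)

theorem norm_iteratedFDerivWithin_norm_sq_le_of_le (hg : ContDiffOn ℝ n g s)
    (hs : UniqueDiffOn ℝ s) (hx : x ∈ s) (hi : i ≤ n) {C ρ μ w : ℝ} (hρ : 0 < ρ) (hw₀ : 0 ≤ w)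
    (hw₁ : w ≤ 1) (hbound : ∀ k ≤ i, ‖iteratedFDerivWithin ℝ k g s x‖ ≤ C * ρ ^ (μ - k) * w) :
    ‖iteratedFDerivWithin ℝ i (fun y => ‖g y‖ ^ 2) s x‖ ≤ 2 ^ i * C ^ 2 * ρ ^ (2 * μ - i) * w := by
  have hterm : ∀ k ∈ Finset.range (i + 1), (i.choose k : ℝ) * ‖iteratedFDerivWithin ℝ k g s x‖ *
      ‖iteratedFDerivWithin ℝ (i - k) g s x‖ ≤ i.choose k * (C ^ 2 * ρ ^ (2 * μ - i) * w) := by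
    intro k hk
    have hki : k ≤ i := Nat.lt_succ_iff.mp (Finset.mem_range.mp hk)
    have hprod := mul_le_mul (hbound k hki) (hbound (i - k) (Nat.sub_le i k)) (norm_nonneg _)
      ((norm_nonneg _).trans (hbound k hki))
    have hρpow : ρ ^ (μ - k) * ρ ^ (μ - ↑(i - k)) = ρ ^ (2 * μ - i) := by
      rw [← Real.rpow_add hρ, Nat.cast_sub hki]
      ring_nf
    calc (i.choose k : ℝ) * ‖iteratedFDerivWithin ℝ k g s x‖ *
          ‖iteratedFDerivWithin ℝ (i - k) g s x‖
        ≤ i.choose k * (C ^ 2 * ρ ^ (2 * μ - i) * w ^ 2) := by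
          rw [mul_assoc]
          exact mul_le_mul_of_nonneg_left (hprod.trans_eq (by rw [← hρpow]; ring)) (by positivity)
      _ ≤ i.choose k * (C ^ 2 * ρ ^ (2 * μ - i) * w) := by
          gcongr
          nlinarith
  calc _ ≤ _ := norm_iteratedFDerivWithin_norm_sq_le hg hs hx hi
    _ ≤ ∑ k ∈ Finset.range (i + 1), (i.choose k : ℝ) * (C ^ 2 * ρ ^ (2 * μ - i) * w) :=
        Finset.sum_le_sum hterm
    _ = _ := by
        rw [← Finset.sum_mul, ← Nat.cast_sum, Nat.sum_range_choose]
        push_cast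
        ring

theorem norm_iteratedFDerivWithin_norm_sq_le_of_decay {m : ℕ} (hg : ContDiffOn ℝ m g {0}ᶜ)
    {C μ : ℝ} {N : ℕ} (hC : ∀ j ≤ m, ∀ k ≠ 0,
      ‖iteratedFDerivWithin ℝ j g {0}ᶜ k‖ ≤ C * ‖k‖ ^ (μ - j) * (1 + ‖k‖) ^ (-(N : ℝ)))
    {j : ℕ} (hj : j ≤ m) {k : E} (hk : k ≠ 0) :
    ‖iteratedFDerivWithin ℝ j (fun y => ‖g y‖ ^ 2) {0}ᶜ k‖ ≤
      2 ^ m * C ^ 2 * ‖k‖ ^ (2 * μ - j) * (1 + ‖k‖) ^ (-(N : ℝ)) :=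
  calc _ ≤ 2 ^ j * C ^ 2 * ‖k‖ ^ (2 * μ - j) * (1 + ‖k‖) ^ (-(N : ℝ)) :=
        norm_iteratedFDerivWithin_norm_sq_le_of_le hg isOpen_compl_singleton.uniqueDiffOn hk
          (by exact_mod_cast hj) (norm_pos_iff.mpr hk) (by positivity)
          (Real.rpow_le_one_of_one_le_of_nonpos (by simp) (by simp))
          fun i hi => hC i (hi.trans hj) k hk
    _ ≤ _ := by gcongr; exact one_le_two

end NormSq

section RadialDerivative

variable {E G : Type*} [NormedAddCommGroup E] [NormedSpace ℝ E]
  [NormedAddCommGroup G] [NormedSpace ℝ G]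

/-- The `j`-th derivative of `t ↦ f (t • σ)` at `r`, when `U` is an open neighbourhood of `r • σ`
on which `f` is `C^j`. -/
noncomputable def radialIteratedDeriv (f : E → G) (U : Set E) (j : ℕ) (r : ℝ) (σ : E) : G :=
  iteratedFDerivWithin ℝ j f U (r • σ) fun _ => σ

variable {f : E → G} {U : Set E} {m : WithTop ℕ∞} {j : ℕ} {b : ℝ → ℝ}

theorem hasDerivAt_radialIteratedDeriv (hU : IsOpen U) (hf : ContDiffOn ℝ m f U) (hj : j < m)
    {r : ℝ} {σ : E} (hr : r • σ ∈ U) :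
    HasDerivAt (radialIteratedDeriv f U j · σ) (radialIteratedDeriv f U (j + 1) r σ) r := by
  have hD : HasFDerivAt (iteratedFDerivWithin ℝ j f U)
      (fderivWithin ℝ (iteratedFDerivWithin ℝ j f U) U (r • σ)) (r • σ) := by
    rw [fderivWithin_of_isOpen hU hr]
    exact ((hf.differentiableOn_iteratedFDerivWithin hj hU.uniqueDiffOn).differentiableAt
      (hU.mem_nhds hr)).hasFDerivAt
  have hline : HasDerivAt (fun t : ℝ => t • σ) σ r := by
    simpa using (hasDerivAt_id r).smul_const σ
  have := (ContinuousMultilinearMap.apply ℝ (fun _ : Fin j => E) G fun _ => σ).hasFDerivAt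
    |>.comp_hasDerivAt r (hD.comp_hasDerivAt r hline)
  exact this.congr_deriv (iteratedFDerivWithin_succ_apply_left fun _ : Fin (j + 1) => σ).symm

theorem continuousOn_radialIteratedDeriv (hU : IsOpen U) (hf : ContDiffOn ℝ m f U) (hj : j ≤ m) :
    ContinuousOn (fun p : ℝ × E => radialIteratedDeriv f U j p.1 p.2) {p | p.1 • p.2 ∈ U} :=
  continuous_eval.comp_continuousOn
    (((hf.continuousOn_iteratedFDerivWithin hj hU.uniqueDiffOn).comp continuous_smul.continuousOn
      fun _ hp => hp).prodMk (by fun_prop))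

theorem norm_radialIteratedDeriv_le (r : ℝ) (σ : E) :
    ‖radialIteratedDeriv f U j r σ‖ ≤ ‖iteratedFDerivWithin ℝ j f U (r • σ)‖ * ‖σ‖ ^ j := by
  simpa [radialIteratedDeriv] using (iteratedFDerivWithin ℝ j f U (r • σ)).le_opNorm fun _ => σ

lemma norm_radialIteratedDeriv_le_of_mem_sphere
    (hfb : ∀ k ≠ 0, ‖iteratedFDerivWithin ℝ j f {0}ᶜ k‖ ≤ b ‖k‖) {r : ℝ} (hr : 0 < r) {σ : E}
    (hσ : σ ∈ sphere 0 1) : ‖radialIteratedDeriv f {0}ᶜ j r σ‖ ≤ b r := by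
  rw [mem_sphere_zero_iff_norm] at hσ
  have hrσ : r • σ ≠ 0 := smul_ne_zero hr.ne' (norm_ne_zero_iff.mp (by simp [hσ]))
  simpa [hσ, norm_smul, abs_of_pos hr] using
    (norm_radialIteratedDeriv_le r σ).trans (mul_le_mul_of_nonneg_right (hfb _ hrσ) (by positivity))

end RadialDerivative

section Chain

variable {G : Type*} [NormedAddCommGroup G] [NormedSpace ℝ G] {s : Set ℝ} {V : ℕ → ℝ → G}
  {m : ℕ}

theorem eqOn_iteratedDerivWithin_of_hasDerivAt (hs : IsOpen s)
    (hV : ∀ j < m, ∀ r ∈ s, HasDerivAt (V j) (V (j + 1) r) r) {j : ℕ} (hj : j ≤ m) :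
    EqOn (iteratedDerivWithin j (V 0) s) (V j) s := by
  induction j with
  | zero => intro r _; simp
  | succ j ih =>
    intro r hr
    rw [iteratedDerivWithin_succ, derivWithin_of_isOpen hs hr,
      (eventuallyEq_of_mem (hs.mem_nhds hr) (ih (by omega))).deriv_eq]
    exact (hV j (by omega) r hr).deriv

theorem contDiffOn_of_hasDerivAt (hs : IsOpen s)
    (hV : ∀ j < m, ∀ r ∈ s, HasDerivAt (V j) (V (j + 1) r) r) (hcont : ContinuousOn (V m) s) :
    ContDiffOn ℝ m (V 0) s := by
  rw [contDiffOn_nat_iff_continuousOn_differentiableOn_deriv hs.uniqueDiffOn]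
  refine ⟨fun j hj => ?_, fun j hj => ?_⟩
  · refine ContinuousOn.congr ?_ (eqOn_iteratedDerivWithin_of_hasDerivAt hs hV hj)
    rcases hj.lt_or_eq with hj | rfl
    · exact fun r hr => (hV j hj r hr).continuousAt.continuousWithinAt
    · exact hcont
  · exact DifferentiableOn.congr
      (fun r hr => (hV j hj r hr).differentiableAt.differentiableWithinAt)
      (eqOn_iteratedDerivWithin_of_hasDerivAt hs hV hj.le)

end Chain

section ParametricIntegral

variable {G : Type*} [NormedAddCommGroup G] [NormedSpace ℝ G] {α : Type*} [MeasurableSpace α]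
  {ν : Measure α} [IsFiniteMeasure ν] {s : Set ℝ} {F F' : ℝ → α → G} {b : ℝ → ℝ} {r₀ : ℝ}

lemma ContinuousOn.eventually_mem_and_lt_add_one (hs : IsOpen s) (hb : ContinuousOn b s)
    (hr₀ : r₀ ∈ s) : ∀ᶠ r in 𝓝 r₀, r ∈ s ∧ b r < b r₀ + 1 :=
  inter_mem (hs.mem_nhds hr₀)
    ((hb.continuousAt (hs.mem_nhds hr₀)).eventually_lt continuousAt_const (lt_add_one _))

theorem hasDerivAt_integral_of_continuousOn_bound (hs : IsOpen s) (hr₀ : r₀ ∈ s)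
    (hF_meas : ∀ r ∈ s, AEStronglyMeasurable (F r) ν) (hF_int : Integrable (F r₀) ν)
    (hF'_meas : AEStronglyMeasurable (F' r₀) ν) (hb : ContinuousOn b s)
    (hF'_le : ∀ᵐ σ ∂ν, ∀ r ∈ s, ‖F' r σ‖ ≤ b r)
    (hF' : ∀ᵐ σ ∂ν, ∀ r ∈ s, HasDerivAt (F · σ) (F' r σ) r) :
    HasDerivAt (fun r => ∫ σ, F r σ ∂ν) (∫ σ, F' r₀ σ ∂ν) r₀ := by
  refine (hasDerivAt_integral_of_dominated_loc_of_deriv_le (bound := fun _ => b r₀ + 1)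
    (hb.eventually_mem_and_lt_add_one hs hr₀) (eventually_of_mem (hs.mem_nhds hr₀) hF_meas)
    hF_int hF'_meas ?_ (integrable_const _) ?_).2
  · filter_upwards [hF'_le] with σ hσ r hr using (hσ r hr.1).trans hr.2.le
  · filter_upwards [hF'] with σ hσ r hr using hσ r hr.1

theorem continuousOn_integral_of_continuousOn_bound (hs : IsOpen s)
    (hF_meas : ∀ r ∈ s, AEStronglyMeasurable (F r) ν) (hb : ContinuousOn b s)
    (hF_le : ∀ᵐ σ ∂ν, ∀ r ∈ s, ‖F r σ‖ ≤ b r) (hF : ∀ᵐ σ ∂ν, ContinuousOn (F · σ) s) :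
    ContinuousOn (fun r => ∫ σ, F r σ ∂ν) s := by
  intro r₀ hr₀
  refine (continuousAt_of_dominated (bound := fun _ => b r₀ + 1)
    (eventually_of_mem (hs.mem_nhds hr₀) hF_meas) ?_ (integrable_const _) ?_).continuousWithinAt
  · filter_upwards [hb.eventually_mem_and_lt_add_one hs hr₀] with r hr
    filter_upwards [hF_le] with σ hσ using (hσ r hr.1).trans hr.2.le
  · filter_upwards [hF] with σ hσ using hσ.continuousAt (hs.mem_nhds hr₀)

end ParametricIntegral

section SphericalIntegral

variable {E G : Type*} [NormedAddCommGroup E] [NormedSpace ℝ E] [MeasurableSpace E]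
  [BorelSpace E] [SecondCountableTopology E] [NormedAddCommGroup G] [NormedSpace ℝ G]
  {ν : Measure E} {f : E → G} {m : ℕ}
  {B : ℕ → ℝ → ℝ}

theorem contDiffOn_setIntegral_sphere_comp_smul (hν : ν (sphere 0 1) < ⊤)
    (hf : ContDiffOn ℝ m f {0}ᶜ)
    (hB : ∀ j ≤ m, ContinuousOn (B j) (Ioi 0))
    (hfB : ∀ j ≤ m, ∀ k ≠ 0, ‖iteratedFDerivWithin ℝ j f {0}ᶜ k‖ ≤ B j ‖k‖) :
    ContDiffOn ℝ m (fun r : ℝ => ∫ σ in sphere 0 1, f (r • σ) ∂ν) (Ioi 0) ∧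
      ∀ j ≤ m, EqOn (iteratedDerivWithin j (fun r : ℝ => ∫ σ in sphere 0 1, f (r • σ) ∂ν) (Ioi 0))
        (fun r : ℝ => ∫ σ in sphere 0 1, radialIteratedDeriv f {0}ᶜ j r σ ∂ν) (Ioi 0) := by
  have := isFiniteMeasure_restrict.mpr hν.ne
  set V : ℕ → ℝ → G := fun j r => ∫ σ in sphere 0 1, radialIteratedDeriv f {0}ᶜ j r σ ∂ν
  have hmem {r : ℝ} {σ : E} (hr : r ∈ Ioi 0) (hσ : σ ∈ sphere 0 1) : r • σ ∈ ({0}ᶜ : Set E) :=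
    smul_ne_zero (ne_of_gt hr) (ne_of_mem_sphere hσ one_ne_zero)
  have hcont (j : ℕ) (hj : j ≤ m) := continuousOn_radialIteratedDeriv isOpen_compl_singleton hf
    (by exact_mod_cast hj)
  have hmeas (j : ℕ) (hj : j ≤ m) (r : ℝ) (hr : r ∈ Ioi 0) :
      AEStronglyMeasurable (radialIteratedDeriv f {0}ᶜ j r) (ν.restrict (sphere 0 1)) :=
    ((hcont j hj).comp (Continuous.prodMk_right r).continuousOn fun _ hσ => hmem hr hσ)
      |>.aestronglyMeasurable isClosed_sphere.measurableSet
  have hle (j : ℕ) (hj : j ≤ m) : ∀ᵐ σ ∂ν.restrict (sphere 0 1), ∀ r ∈ Ioi 0,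
      ‖radialIteratedDeriv f {0}ᶜ j r σ‖ ≤ B j r :=
    ae_restrict_of_forall_mem isClosed_sphere.measurableSet fun _ hσ _ hr =>
      norm_radialIteratedDeriv_le_of_mem_sphere (hfB j hj) hr hσ
  have hderiv : ∀ j < m, ∀ r ∈ Ioi 0, HasDerivAt (V j) (V (j + 1) r) r := by
    intro j hj r hr
    have hint : Integrable (radialIteratedDeriv f {0}ᶜ j r) (ν.restrict (sphere 0 1)) :=
      .of_bound (hmeas j hj.le r hr) (B j r)
        (by filter_upwards [hle j hj.le] with σ hσ using hσ r hr)
    refine hasDerivAt_integral_of_continuousOn_bound isOpen_Ioi hr (hmeas j hj.le) hint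
      (hmeas (j + 1) hj r hr) (hB (j + 1) hj) (hle (j + 1) hj) ?_
    filter_upwards [ae_restrict_mem isClosed_sphere.measurableSet] with σ hσ r hr
    exact hasDerivAt_radialIteratedDeriv isOpen_compl_singleton hf (by exact_mod_cast hj)
      (hmem hr hσ)
  have hV0 : V 0 = fun r => ∫ σ in sphere 0 1, f (r • σ) ∂ν := by
    simp [V, radialIteratedDeriv]
  have hVm : ContinuousOn (V m) (Ioi 0) := by
    refine continuousOn_integral_of_continuousOn_bound isOpen_Ioi (hmeas m le_rfl) (hB m le_rfl)
      (hle m le_rfl) ?_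
    filter_upwards [ae_restrict_mem isClosed_sphere.measurableSet] with σ hσ
    exact (hcont m le_rfl).comp (Continuous.prodMk_left σ).continuousOn fun _ hr => hmem hr hσ
  have hcd := contDiffOn_of_hasDerivAt isOpen_Ioi hderiv hVm
  have heq := fun j (hj : j ≤ m) => eqOn_iteratedDerivWithin_of_hasDerivAt isOpen_Ioi hderiv hj
  rw [hV0] at hcd heq
  exact ⟨hcd, heq⟩

end SphericalIntegral

theorem stmt8_general (m : ℕ) (μ : ℝ)
    (g : EuclideanSpace ℝ (Fin 3) → ℂ)
    (hg : ContDiffOn ℝ m g {(0 : EuclideanSpace ℝ (Fin 3))}ᶜ)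
    (hbound : ∀ N : ℕ, ∃ C : ℝ, 0 ≤ C ∧
      ∀ j : ℕ, j ≤ m → ∀ k : EuclideanSpace ℝ (Fin 3), k ≠ 0 →
        ‖iteratedFDerivWithin ℝ j g {(0 : EuclideanSpace ℝ (Fin 3))}ᶜ k‖ ≤
          C * ‖k‖ ^ (μ - (j : ℝ)) * (1 + ‖k‖) ^ (-(N : ℝ))) :
    ContDiffOn ℝ m (sphAvg g) (Set.Ioi 0) ∧
    ∀ N : ℕ, ∃ C' : ℝ, 0 ≤ C' ∧
      ∀ j : ℕ, j ≤ m → ∀ r : ℝ, 0 < r →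
        |iteratedDerivWithin j (sphAvg g) (Set.Ioi 0) r| ≤
          C' * r ^ (2 * μ - (j : ℝ)) * (1 + r) ^ (-(N : ℝ)) := by
  unfold sphAvg
  obtain ⟨C₀, -, hC₀⟩ := hbound 0
  obtain ⟨hcd, heq⟩ := contDiffOn_setIntegral_sphere_comp_smul hausdorffMeasure_sphere_lt_top
    (hg.norm_sq ℝ) (B := fun j ρ => 2 ^ m * C₀ ^ 2 * ρ ^ (2 * μ - j))
    (fun j _ => continuousOn_const.mul <| continuousOn_id.rpow_const fun ρ hρ => .inl (ne_of_gt hρ))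
    fun j hj k hk => by simpa using norm_iteratedFDerivWithin_norm_sq_le_of_decay hg hC₀ hj hk
  refine ⟨hcd, fun N => ?_⟩
  obtain ⟨C, hC, hCN⟩ := hbound N
  refine ⟨2 ^ m * C ^ 2 * (μH[2] : Measure (EuclideanSpace ℝ (Fin 3))).real (sphere 0 1),
    by positivity, fun j hj r hr => ?_⟩
  rw [heq j hj hr, ← Real.norm_eq_abs]
  refine (norm_setIntegral_le_of_norm_le_const hausdorffMeasure_sphere_lt_top fun σ hσ =>
    norm_radialIteratedDeriv_le_of_mem_sphere
      (b := fun ρ => 2 ^ m * C ^ 2 * ρ ^ (2 * μ - j) * (1 + ρ) ^ (-(N : ℝ)))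
      (fun k hk => norm_iteratedFDerivWithin_norm_sq_le_of_decay hg hCN hj hk) hr hσ).trans_eq ?_
  ring

/-- if `μ > 0`, `m ∈ {2,3}`, and `g` is `m`-times continuously differentiable
away from `0` with `‖D^j g(k)‖ ≤ C_N ‖k‖^{μ-j}(1+‖k‖)^{-N}` for `0 ≤ j ≤ m`, `k ≠ 0`, every
`N`, then the spherical average `F(r) = ∫_{S²} |g(rσ)|² dσ` is `m`-times continuously
differentiable on `(0,∞)` and `|F^{(j)}(r)| ≤ C'_N r^{2μ-j}(1+r)^{-N}` for `0 ≤ j ≤ m`,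
`r > 0`, every `N`. -/
theorem stmt8 (m : ℕ) (hm : m = 2 ∨ m = 3) (μ : ℝ) (hμ : 0 < μ)
    (g : EuclideanSpace ℝ (Fin 3) → ℂ)
    (hg : ContDiffOn ℝ m g {(0 : EuclideanSpace ℝ (Fin 3))}ᶜ)
    (hbound : ∀ N : ℕ, ∃ C : ℝ, 0 ≤ C ∧
      ∀ j : ℕ, j ≤ m → ∀ k : EuclideanSpace ℝ (Fin 3), k ≠ 0 →
        ‖iteratedFDerivWithin ℝ j g {(0 : EuclideanSpace ℝ (Fin 3))}ᶜ k‖ ≤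
          C * ‖k‖ ^ (μ - (j : ℝ)) * (1 + ‖k‖) ^ (-(N : ℝ))) :
    ContDiffOn ℝ m (sphAvg g) (Set.Ioi 0) ∧
    ∀ N : ℕ, ∃ C' : ℝ, 0 ≤ C' ∧
      ∀ j : ℕ, j ≤ m → ∀ r : ℝ, 0 < r →
        |iteratedDerivWithin j (sphAvg g) (Set.Ioi 0) r| ≤
          C' * r ^ (2 * μ - (j : ℝ)) * (1 + r) ^ (-(N : ℝ)) :=
  stmt8_general m μ g hg hbound
end
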